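/- arXiv:0804.1583 — 8 statements merged into one kernel-verified Lean document; each statement's English description precedes it below -/
import Mathlib

section
/- A topological group G is precompact if and only if for every nonempty open subset V of G there exists a finite subset F of G such that F·V·F = G. -/
/-! If `W` is an open neighbourhood of `1` with `W * W⁻¹ ⊆ U` and `F * W * F = G`, the
finitely many sets `a * W * c` (`a c ∈ F`) cover `G`. In any finite cover of a group some piece
`A` has `A * A⁻¹` left syndetic: take a minimal closed translation-invariant set `M ⊆ βG` and
`p ∈ M` containing a piece `A`; by minimality and compactness finitely many of the clopen sets
`{q | g • A ∈ q}` cover `M`, and evaluating this cover at the translates of `p` gives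
`G = I * A * A⁻¹`. For `A = a * W * c` this is `G = I * a * W * W⁻¹ * a⁻¹`, hence
`G = (I * a) * U`. -/

open Pointwise

/-- A topological group is precompact if every neighbourhood `V` of the identity
admits a finite set `F` with `F * V = G`. -/
def IsPrecompactGroup (G : Type*) [Group G] [TopologicalSpace G] : Prop :=
  ∀ V ∈ nhds (1 : G), ∃ F : Finset G, (F : Set G) * V = Set.univ

open Filter Set

namespace Ultrafilter

variable {G : Type*} [Group G]

def IsSubflow (M : Set (Ultrafilter G)) : Prop :=
  IsClosed M ∧ M.Nonempty ∧ ∀ g : G, ∀ p ∈ M, p.map (g • ·) ∈ M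

variable (G) in
theorem exists_minimal_isSubflow : ∃ M : Set (Ultrafilter G), Minimal IsSubflow M := by
  refine zorn_superset {M | IsSubflow M} fun c hc hchain => ?_
  obtain rfl | hne := c.eq_empty_or_nonempty
  · exact ⟨univ, ⟨isClosed_univ, univ_nonempty, fun _ _ _ => mem_univ _⟩, by simp⟩
  refine ⟨⋂₀ c, ⟨isClosed_sInter fun M hM => (hc hM).1, ?_, ?_⟩,
    fun M hM => sInter_subset_of_mem hM⟩
  · have := hne.coe_sort
    exact IsCompact.nonempty_sInter_of_directed_nonempty_isCompact_isClosed
      (IsChain.directedOn (r := fun M N : Set (Ultrafilter G) => M ⊇ N) hchain.symm)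
      (fun M hM => (hc hM).2.1) (fun M hM => (hc hM).1.isCompact) (fun M hM => (hc hM).1)
  · exact fun g p hp M hM => (hc hM).2.2 g p (hp M hM)

theorem mem_map_smul_iff {p : Ultrafilter G} {g : G} {A : Set G} :
    A ∈ p.map (g • ·) ↔ g⁻¹ • A ∈ p := by
  rw [mem_map, preimage_smul]

theorem subset_iUnion_smul_mem_of_minimal {M : Set (Ultrafilter G)} (hM : Minimal IsSubflow M)
    {p : Ultrafilter G} (hp : p ∈ M) {A : Set G} (hA : A ∈ p) :
    M ⊆ ⋃ g : G, {q | g • A ∈ q} := by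
  set C := M \ ⋃ g : G, {q | g • A ∈ q}
  have hC : C ⊆ M := sdiff_subset
  have hCinv : ∀ g : G, ∀ q ∈ C, q.map (g • ·) ∈ C := by
    rintro g q ⟨hqM, hq⟩
    refine ⟨hM.prop.2.2 g q hqM, fun hmem => hq ?_⟩
    obtain ⟨h, hh⟩ := mem_iUnion.1 hmem
    exact mem_iUnion.2 ⟨g⁻¹ * h, by rwa [mem_ofPred_eq, mul_smul, ← mem_map_smul_iff]⟩
  have hpC : p ∉ C := fun hpC => hpC.2 (mem_iUnion.2 ⟨1, by rwa [mem_ofPred_eq, one_smul]⟩)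
  have hCempty : C = ∅ := by
    by_contra hne
    have hCM : C = M := hM.eq_of_subset ⟨hM.prop.1.sdiff (isOpen_iUnion fun g =>
      ultrafilter_isOpen_basic _), nonempty_iff_ne_empty.2 hne, hCinv⟩ hC
    exact hpC (hCM ▸ hp)
  exact sdiff_eq_empty.1 hCempty

theorem exists_finset_mul_mul_inv_eq_univ_of_minimal {M : Set (Ultrafilter G)}
    (hM : Minimal IsSubflow M) {p : Ultrafilter G} (hp : p ∈ M) {A : Set G} (hA : A ∈ p) :
    ∃ I : Finset G, (I : Set G) * A * A⁻¹ = univ := by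
  obtain ⟨I, hI⟩ := hM.prop.1.isCompact.elim_finite_subcover (fun g : G => {q | g • A ∈ q})
    (fun g => ultrafilter_isOpen_basic _) (subset_iUnion_smul_mem_of_minimal hM hp hA)
  refine ⟨I, eq_univ_of_forall fun h => ?_⟩
  obtain ⟨g, hgI, hg⟩ := mem_iUnion₂.1 (hI (hM.prop.2.2 h p hp))
  have hgA : (h⁻¹ * g) • A ∈ p := by rw [← smul_smul]; exact mem_map_smul_iff.1 hg
  obtain ⟨_, hxA, a, haA, rfl⟩ := nonempty_of_mem (inter_mem (mem_coe.2 hA) (mem_coe.2 hgA))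
  refine ⟨g * a, Set.mul_mem_mul (Finset.mem_coe.2 hgI) haA, _, inv_mem_inv.2 hxA, ?_⟩
  simp only [smul_eq_mul]
  group

end Ultrafilter

theorem exists_finset_mul_mul_inv_eq_univ_of_biUnion_eq_univ {G ι : Type*} [Group G]
    {s : Finset ι} {A : ι → Set G} (hA : ⋃ i ∈ s, A i = univ) :
    ∃ i ∈ s, ∃ I : Finset G, (I : Set G) * A i * (A i)⁻¹ = univ := by
  obtain ⟨M, hM⟩ := Ultrafilter.exists_minimal_isSubflow G
  obtain ⟨p, hp⟩ := hM.prop.2.1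
  obtain ⟨i, hi, hAi⟩ := (Ultrafilter.finite_biUnion_mem_iff s.finite_toSet).1 (hA ▸ univ_mem)
  exact ⟨i, hi, Ultrafilter.exists_finset_mul_mul_inv_eq_univ_of_minimal hM hp hAi⟩

variable {G : Type*} [Group G] [TopologicalSpace G]

theorem IsPrecompactGroup.exists_finset_mul_mul_eq_univ [ContinuousMul G]
    (hG : IsPrecompactGroup G) {V : Set G} (hV : IsOpen V) (hne : V.Nonempty) :
    ∃ F : Finset G, (F : Set G) * V * (F : Set G) = univ := by
  classical
  obtain ⟨v, hv⟩ := hne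
  obtain ⟨F, hF⟩ := hG (v⁻¹ • V) ((hV.smul v⁻¹).mem_nhds ⟨v, hv, inv_mul_cancel v⟩)
  refine ⟨F * {v⁻¹} ∪ 1, eq_univ_of_univ_subset ?_⟩
  calc univ = (F : Set G) * {v⁻¹} * V * 1 := by
        rw [← hF, mul_one, mul_assoc, singleton_mul]; rfl
    _ ⊆ _ := by push_cast; gcongr <;> simp

theorem IsPrecompactGroup.of_forall_finset_mul_mul_eq_univ [IsTopologicalGroup G]
    (h : ∀ V : Set G, IsOpen V → V.Nonempty →
      ∃ F : Finset G, (F : Set G) * V * (F : Set G) = univ) :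
    IsPrecompactGroup G := by
  classical
  intro U hU
  obtain ⟨V, hVo, hV1, hVU⟩ := exists_open_nhds_one_mul_subset hU
  set W := V ∩ V⁻¹
  obtain ⟨F, hF⟩ := h W (hVo.inter hVo.inv) ⟨1, hV1, by simpa using hV1⟩
  have hcover : ⋃ x ∈ F ×ˢ F, {g : G | x.1⁻¹ * g * x.2⁻¹ ∈ W} = univ := by
    refine eq_univ_of_forall fun g => ?_
    obtain ⟨_, ⟨a, ha, w, hw, rfl⟩, c, hc, rfl⟩ := hF ▸ mem_univ g
    refine mem_iUnion₂.2 ⟨(a, c), Finset.mk_mem_product ha hc, ?_⟩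
    rwa [mem_ofPred_eq, show a⁻¹ * (a * w * c) * c⁻¹ = w by group]
  obtain ⟨⟨a, c⟩, -, I, hI⟩ := exists_finset_mul_mul_inv_eq_univ_of_biUnion_eq_univ hcover
  refine ⟨I * {a}, eq_univ_of_forall fun g => ?_⟩
  obtain ⟨_, ⟨i, hi, x, hx, rfl⟩, y, hy, hg⟩ := hI ▸ mem_univ (g * a⁻¹)
  refine ⟨i * a, by simpa using hi, (a⁻¹ * x * c⁻¹) * (a⁻¹ * y⁻¹ * c⁻¹)⁻¹,
    hVU (Set.mul_mem_mul hx.1 hy.2), ?_⟩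
  rw [mul_inv_eq_iff_eq_mul.1 hg.symm]
  group

/-- Uspenskij–Solecki criterion: a topological group `G` is precompact if and only if
for every nonempty open `V ⊆ G` there is a finite `F` with `F * V * F = G`. -/
theorem statement2 (G : Type) [Group G] [TopologicalSpace G] [IsTopologicalGroup G] :
    IsPrecompactGroup G ↔
      ∀ V : Set G, IsOpen V → V.Nonempty →
        ∃ F : Finset G, (F : Set G) * V * (F : Set G) = Set.univ :=
  ⟨fun hG _ hV hne => hG.exists_finset_mul_mul_eq_univ hV hne,
    IsPrecompactGroup.of_forall_finset_mul_mul_eq_univ⟩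
end

section
/- Let G be a precompact topological group acting continuously by affine isometries on a real Banach space E. Then G admits a fixed point: there exists ξ ∈ E such that g·ξ = ξ for all g ∈ G. -/
open Pointwise

/-- A jointly continuous action of `G` on a metric space by bijective isometries
(on a real Banach space, every such isometry is automatically affine by Mazur–Ulam). -/
def IsContIsometricAction {G X : Type*} [Group G] [TopologicalSpace G] [MetricSpace X]
    (act : G → X → X) : Prop :=
  (∀ g, Isometry (act g)) ∧ (∀ g, Function.Bijective (act g)) ∧
    (∀ x, act 1 x = x) ∧ (∀ g h x, act (g * h) x = act g (act h x)) ∧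
    Continuous fun p : G × X => act p.1 p.2

/-!
The closed convex hull `K` of an orbit is compact: precompactness of `G` and continuity make the
orbit totally bounded, and `E` is complete. By Mazur–Ulam every `g` acts affinely, so `K` is
`G`-invariant. Zorn's lemma gives a minimal nonempty compact convex invariant `M ⊆ K`. If `M` had
positive diameter `d`, the barycentre of a finite `d/2`-net of `M` would lie within some `r < d` of
all of `M`; the points of `M` with this property form a smaller compact convex invariant set.
Hence `M` is a single point, which is fixed by `G`.
-/

open Metric Set Topology

variable {E : Type*} [NormedAddCommGroup E] [NormedSpace ℝ E]

open Finset in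
theorem IsCompact.exists_nondiametral_point {M : Set E} (hM : IsCompact M) (hconv : Convex ℝ M)
    (hd : 0 < diam M) : ∃ c ∈ M, ∃ r < diam M, M ⊆ closedBall c r := by
  classical
  have hMne : M.Nonempty := nonempty_iff_ne_empty.2 (by rintro rfl; simp at hd)
  set d := diam M
  obtain ⟨t, htM, hcov⟩ := hM.elim_nhds_subcover (fun x => ball x (d / 2))
    fun x _ => ball_mem_nhds x (by positivity)
  have htne : t.Nonempty := by
    obtain ⟨x, hx, -⟩ := mem_iUnion₂.1 (hcov hMne.some_mem)
    exact ⟨x, hx⟩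
  set n : ℝ := Nat.cast t.card
  have hn : 0 < n := Nat.cast_pos.2 (card_pos.2 htne)
  have hweights : ∑ _x ∈ t, n⁻¹ = 1 := by rw [sum_const, nsmul_eq_mul, mul_inv_cancel₀ hn.ne']
  refine ⟨∑ x ∈ t, n⁻¹ • x, hconv.sum_mem (fun _ _ => by positivity) hweights htM,
    d - d / (2 * n), sub_lt_self _ (by positivity), fun y hy => ?_⟩
  obtain ⟨x₁, hx₁, hyx₁⟩ := mem_iUnion₂.1 (hcov hy)
  have hsum : ∑ x ∈ t, ‖x - y‖ ≤ n * d - d / 2 := by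
    have hfar : ∑ x ∈ t.erase x₁, ‖x - y‖ ≤ (n - 1) * d := by
      refine (sum_le_card_nsmul _ _ d fun x hx => ?_).trans_eq ?_
      · rw [← dist_eq_norm]
        exact dist_le_diam_of_mem hM.isBounded (htM x (mem_of_mem_erase hx)) hy
      · rw [card_erase_of_mem hx₁, nsmul_eq_mul, Nat.cast_pred (card_pos.2 htne)]
    have hnear : ‖x₁ - y‖ ≤ d / 2 := by rw [← dist_eq_norm, dist_comm]; exact hyx₁.le
    rw [← add_sum_erase _ _ hx₁]
    linarith
  have hy_avg : ∑ _x ∈ t, n⁻¹ • y = y := by rw [← sum_smul, hweights, one_smul]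
  rw [mem_closedBall]
  calc dist y (∑ x ∈ t, n⁻¹ • x) = ‖∑ x ∈ t, n⁻¹ • (x - y)‖ := by
        rw [dist_comm, dist_eq_norm]; simp only [smul_sub, sum_sub_distrib, hy_avg]
    _ ≤ ∑ x ∈ t, n⁻¹ * ‖x - y‖ := (norm_sum_le _ _).trans_eq (by simp [norm_smul, n])
    _ = n⁻¹ * ∑ x ∈ t, ‖x - y‖ := (mul_sum ..).symm
    _ ≤ n⁻¹ * (n * d - d / 2) := by gcongr
    _ = d - d / (2 * n) := by field_simp

section IsometricAction

variable (G : Type*) [Group G] [MulAction G E]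

structure IsInvariantCompactConvex (M : Set E) : Prop where
  nonempty : M.Nonempty
  isCompact : IsCompact M
  convex : Convex ℝ M
  smul_subset : ∀ g : G, g • M ⊆ M

variable {G}

theorem IsInvariantCompactConvex.sInter_of_isChain {S : Set (Set E)}
    (hS : ∀ M ∈ S, IsInvariantCompactConvex G M) (hchain : IsChain (· ⊆ ·) S) (hne : S.Nonempty) :
    IsInvariantCompactConvex G (⋂₀ S) := by
  have : Nonempty S := hne.to_subtype
  obtain ⟨M₀, hM₀⟩ := hne
  refine ⟨?_, ?_, ?_, ?_⟩
  · exact IsCompact.nonempty_sInter_of_directed_nonempty_isCompact_isClosed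
      (fun A hA B hB => (hchain.total hA hB).elim
        (fun h => ⟨A, hA, subset_rfl, h⟩) (fun h => ⟨B, hB, h, subset_rfl⟩))
      (fun M hM => (hS M hM).nonempty) (fun M hM => (hS M hM).isCompact)
      (fun M hM => (hS M hM).isCompact.isClosed)
  · exact (hS M₀ hM₀).isCompact.of_isClosed_subset
      (isClosed_sInter fun M hM => (hS M hM).isCompact.isClosed) (sInter_subset_of_mem hM₀)
  · exact convex_sInter fun M hM => (hS M hM).convex
  · exact fun g => (smul_set_sInter_subset g S).trans
      (subset_sInter fun M hM => (iInter₂_subset M hM).trans ((hS M hM).smul_subset g))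

variable [IsIsometricSMul G E]

theorem IsInvariantCompactConvex.inter_biInter_closedBall {M : Set E}
    (hM : IsInvariantCompactConvex G M) {c : E} (hc : c ∈ M) {r : ℝ} (hcr : M ⊆ closedBall c r) :
    IsInvariantCompactConvex G (M ∩ ⋂ y ∈ M, closedBall y r) := by
  refine ⟨⟨c, hc, mem_iInter₂.2 fun y hy => ?_⟩, ?_, ?_, fun g => ?_⟩
  · rw [mem_closedBall_comm]; exact hcr hy
  · exact hM.isCompact.inter_right (isClosed_biInter fun y _ => isClosed_closedBall)
  · exact hM.convex.inter (convex_iInter₂ fun y _ => convex_closedBall y r)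
  rintro _ ⟨x, ⟨hxM, hx⟩, rfl⟩
  refine ⟨hM.smul_subset g (smul_mem_smul_set hxM), mem_iInter₂.2 fun y hy => ?_⟩
  rw [mem_closedBall, ← dist_smul g⁻¹, inv_smul_smul]
  exact mem_iInter₂.1 hx _ (hM.smul_subset g⁻¹ (smul_mem_smul_set hy))

theorem IsInvariantCompactConvex.diam_eq_zero_of_minimal {M : Set E}
    (hM : Minimal (IsInvariantCompactConvex G) M) : diam M = 0 := by
  by_contra hd
  obtain ⟨c, hc, r, hr, hcr⟩ :=
    hM.prop.isCompact.exists_nondiametral_point hM.prop.convex (diam_nonneg.lt_of_ne' hd)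
  have hsub := hM.le_of_le (hM.prop.inter_biInter_closedBall hc hcr) inter_subset_left
  refine hr.not_ge (diam_le_of_forall_dist_le (dist_nonneg.trans (hcr hc)) fun x hx y hy => ?_)
  exact mem_iInter₂.1 (hsub hx).2 y hy

theorem IsInvariantCompactConvex.exists_fixed {K : Set E} (hK : IsInvariantCompactConvex G K) :
    ∃ ξ ∈ K, ∀ g : G, g • ξ = ξ := by
  obtain ⟨M, hMK, hM : Minimal (IsInvariantCompactConvex G) M⟩ :=
    zorn_superset_nonempty {M | IsInvariantCompactConvex G M}
      (fun S hS hchain hne => ⟨⋂₀ S, .sInter_of_isChain hS hchain hne,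
        fun _ => sInter_subset_of_mem⟩) K hK
  obtain ⟨ξ, hξ⟩ := hM.prop.nonempty
  refine ⟨ξ, hMK hξ, fun g => dist_le_zero.1 ?_⟩
  rw [← IsInvariantCompactConvex.diam_eq_zero_of_minimal hM]
  exact dist_le_diam_of_mem hM.prop.isCompact.isBounded
    (hM.prop.smul_subset g (smul_mem_smul_set hξ)) hξ

theorem smul_closure_convexHull (g : G) (s : Set E) :
    g • closure (convexHull ℝ s) = closure (convexHull ℝ (g • s)) := by
  let e := (IsometryEquiv.constSMul (X := E) g).toRealAffineIsometryEquiv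
  have he : ⇑e = (g • ·) := IsometryEquiv.coeFn_toRealAffineIsometryEquiv _
  rw [← closure_smul, ← Set.image_smul, ← Set.image_smul, ← he]
  exact congrArg closure (e.toAffineEquiv.toAffineMap.image_convexHull s)

theorem isInvariantCompactConvex_closure_convexHull_orbit [CompleteSpace E] {x : E}
    (hx : TotallyBounded (MulAction.orbit G x)) :
    IsInvariantCompactConvex G (closure (convexHull ℝ (MulAction.orbit G x))) where
  nonempty := ⟨x, subset_closure (subset_convexHull ℝ _ (MulAction.mem_orbit_self x))⟩
  isCompact := (totallyBounded_convexHull.2 hx).closure.isCompact_of_isClosed isClosed_closure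
  convex := (convex_convexHull ℝ _).closure
  smul_subset g := by rw [smul_closure_convexHull, MulAction.smul_orbit]

end IsometricAction

theorem IsPrecompactGroup.totallyBounded_orbit {G X : Type*} [Group G] [TopologicalSpace G]
    [PseudoMetricSpace X] [MulAction G X] [IsIsometricSMul G X] (hG : IsPrecompactGroup G) {x : X}
    (hx : ContinuousAt (· • x) (1 : G)) : TotallyBounded (MulAction.orbit G x) := by
  refine Metric.totallyBounded_iff.2 fun ε hε => ?_
  have hV : (· • x) ⁻¹' ball x ε ∈ 𝓝 (1 : G) :=
    hx.preimage_mem_nhds (by rw [one_smul]; exact ball_mem_nhds x hε)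
  obtain ⟨F, hF⟩ := hG _ hV
  refine ⟨(· • x) '' (F : Set G), F.finite_toSet.image _, ?_⟩
  rintro _ ⟨g, rfl⟩
  obtain ⟨f, hf, v, hv, rfl⟩ : g ∈ (F : Set G) * (· • x) ⁻¹' ball x ε := hF ▸ mem_univ g
  refine mem_iUnion₂.2 ⟨f • x, mem_image_of_mem _ hf, ?_⟩
  change dist ((f * v) • x) (f • x) < ε
  rwa [mul_smul, dist_smul]

theorem statement3_general {G E : Type} [Group G] [TopologicalSpace G]
    [NormedAddCommGroup E] [NormedSpace ℝ E] [CompleteSpace E]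
    (hpre : IsPrecompactGroup G)
    (act : G → E → E) (hact : IsContIsometricAction act) :
    ∃ ξ : E, ∀ g : G, act g ξ = ξ := by
  obtain ⟨hiso, -, hone, hmul, hcont⟩ := hact
  let _ : MulAction G E := { smul := act, one_smul := hone, mul_smul := hmul }
  have _ : IsIsometricSMul G E := ⟨hiso⟩
  have horbit : ContinuousAt (· • (0 : E)) (1 : G) :=
    (hcont.comp (Continuous.prodMk_left 0)).continuousAt
  obtain ⟨ξ, -, hξ⟩ := (isInvariantCompactConvex_closure_convexHull_orbit
    (hpre.totallyBounded_orbit horbit)).exists_fixed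
  exact ⟨ξ, hξ⟩

/-- Every continuous affine isometric action of a precompact topological group on a real
Banach space has a fixed point. -/
theorem statement3 {G E : Type} [Group G] [TopologicalSpace G] [IsTopologicalGroup G]
    [NormedAddCommGroup E] [NormedSpace ℝ E] [CompleteSpace E]
    (hpre : IsPrecompactGroup G)
    (act : G → E → E) (hact : IsContIsometricAction act) :
    ∃ ξ : E, ∀ g : G, act g ξ = ξ :=
  statement3_general hpre act hact
end

section
/- Let G be a topological group, E a reflexive real Banach space, and π a strongly continuous representation of G by bijective linear isometries of E (i.e., π : G → GL(E) is a group homomorphism into bijective linear isometries such that each orbit map g ↦ π(g)ξ is continuous). Then for every ξ ∈ E and every bounded linear functional φ ∈ E', the matrix coefficient g ↦ φ(π(g)ξ) is a weakly almost periodic function on G. -/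
open BoundedContinuousFunction

/-- A bounded continuous real-valued function on a topological group is weakly almost
periodic if the set of its left translates is relatively compact in the weak topology
of the Banach space of bounded continuous functions. -/
def IsWAP {G : Type*} [Group G] [TopologicalSpace G] [IsTopologicalGroup G] (f : G →ᵇ ℝ) : Prop :=
  IsCompact (closure
    (toWeakSpace ℝ (G →ᵇ ℝ) ''
      {h : G →ᵇ ℝ | ∃ g : G, h = f.compContinuous
        (⟨fun x => g * x, continuous_const.mul continuous_id⟩ : C(G, G))}))

/-!
The matrix coefficient is `T φ` for the bounded operator `T : E' → C_b(G)`, `ψ ↦ (g ↦ ψ (π g ξ))`.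
Its left translate by `g` is `T (φ ∘ π g)`, and `‖φ ∘ π g‖ = ‖φ‖`, so all translates lie in the
image under `T` of a closed ball of `E'`. That ball is weak-* compact (Banach–Alaoglu), and since
`E` is reflexive every bounded operator on `E'` is weak-* to weak continuous, so the image is weakly
compact.
-/

section Reflexive

variable {𝕜 E F : Type*} [RCLike 𝕜] [NormedAddCommGroup E] [NormedSpace 𝕜 E]
  [NormedAddCommGroup F] [NormedSpace 𝕜 F]

/-- By reflexivity, `Φ ∘ T` is evaluation at a point of `E` for every `Φ ∈ F'`. -/
theorem ContinuousLinearMap.continuous_weakDual_toWeakSpace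
    (hrefl : Function.Surjective (NormedSpace.inclusionInDoubleDual 𝕜 E))
    (T : StrongDual 𝕜 E →L[𝕜] F) :
    Continuous fun ψ : WeakDual 𝕜 E => toWeakSpace 𝕜 F (T (WeakDual.toStrongDual ψ)) := by
  refine WeakBilin.continuous_of_continuous_eval _ fun Φ => ?_
  obtain ⟨η, hη⟩ := hrefl (Φ.comp T)
  have hΦT : ∀ ψ : StrongDual 𝕜 E, Φ (T ψ) = ψ η := fun ψ => by
    rw [← ContinuousLinearMap.comp_apply, ← hη, NormedSpace.dual_def]
  exact (WeakBilin.eval_continuous _ η).congr fun ψ => (hΦT ψ).symm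

theorem ContinuousLinearMap.isCompact_toWeakSpace_image_closedBall
    (hrefl : Function.Surjective (NormedSpace.inclusionInDoubleDual 𝕜 E))
    (T : StrongDual 𝕜 E →L[𝕜] F) (r : ℝ) :
    IsCompact (toWeakSpace 𝕜 F '' (T '' Metric.closedBall 0 r)) := by
  have hK := (WeakDual.isCompact_closedBall (𝕜 := 𝕜) (E := E) 0 r).image
    (T.continuous_weakDual_toWeakSpace hrefl)
  convert hK using 1
  conv_lhs => rw [← Set.image_preimage_eq (Metric.closedBall 0 r)
    WeakDual.toStrongDual.surjective]
  simp only [Set.image_image]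

end Reflexive

section DualCompLeft

variable {𝕜 α E : Type*} [RCLike 𝕜] [TopologicalSpace α] [NormedAddCommGroup E]
  [NormedSpace 𝕜 E]

noncomputable def BoundedContinuousFunction.dualCompLeft (u : α →ᵇ E) :
    StrongDual 𝕜 E →L[𝕜] (α →ᵇ 𝕜) :=
  LinearMap.mkContinuous
    { toFun := fun ψ => ψ.compLeftContinuousBounded α u
      map_add' := fun _ _ => by ext; simp
      map_smul' := fun _ _ => by ext; simp } ‖u‖
    fun ψ => (BoundedContinuousFunction.norm_le (by positivity)).2 fun x => by
      rw [mul_comm]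
      exact ψ.le_opNorm_of_le (u.norm_coe_le_norm x)

@[simp]
theorem BoundedContinuousFunction.dualCompLeft_apply (u : α →ᵇ E) (ψ : StrongDual 𝕜 E)
    (x : α) :
    dualCompLeft u ψ x = ψ (u x) :=
  rfl

end DualCompLeft

section Representation

variable {𝕜 G E : Type*} [RCLike 𝕜] [Monoid G] [TopologicalSpace G] [NormedAddCommGroup E]
  [NormedSpace 𝕜 E]

noncomputable def orbitBCF (π : G → E ≃ₗᵢ[𝕜] E) (ξ : E) (hξ : Continuous fun g => π g ξ) :
    G →ᵇ E :=
  .ofNormedAddCommGroup (fun g => π g ξ) hξ ‖ξ‖ fun g => (π g).norm_map ξ |>.le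

theorem dualCompLeft_orbitBCF_compContinuous_mul_left [ContinuousMul G] (π : G → E ≃ₗᵢ[𝕜] E)
    (hmul : ∀ g h : G, π (g * h) = (π h).trans (π g)) (ξ : E) (hξ : Continuous fun g => π g ξ)
    (ψ : StrongDual 𝕜 E) (g : G) :
    (dualCompLeft (orbitBCF π ξ hξ) ψ).compContinuous
        ⟨fun x => g * x, continuous_const.mul continuous_id⟩ =
      dualCompLeft (orbitBCF π ξ hξ) (ψ.comp (π g : E →L[𝕜] E)) := by
  ext x
  simp [orbitBCF, hmul]

end Representation

theorem isWAP_of_translates_mem_image_closedBall {G E : Type*} [Group G] [TopologicalSpace G]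
    [IsTopologicalGroup G] [NormedAddCommGroup E] [NormedSpace ℝ E]
    (hrefl : Function.Surjective (NormedSpace.inclusionInDoubleDual ℝ E))
    (T : StrongDual ℝ E →L[ℝ] (G →ᵇ ℝ)) (r : ℝ) (f : G →ᵇ ℝ)
    (hf : ∀ g : G, f.compContinuous ⟨fun x => g * x, continuous_const.mul continuous_id⟩ ∈
      T '' Metric.closedBall 0 r) :
    IsWAP f :=
  (T.isCompact_toWeakSpace_image_closedBall hrefl r).closure_of_subset <|
    Set.image_mono <| by rintro _ ⟨g, rfl⟩; exact hf g

theorem statement7_general {G : Type} [Group G] [TopologicalSpace G] [IsTopologicalGroup G]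
    {E : Type} [NormedAddCommGroup E] [NormedSpace ℝ E]
    (hrefl : Function.Surjective (NormedSpace.inclusionInDoubleDual ℝ E))
    (π : G → (E ≃ₗᵢ[ℝ] E))
    (hmul : ∀ g h : G, π (g * h) = (π h).trans (π g))
    (hcont : ∀ ξ : E, Continuous fun g : G => π g ξ) :
    ∀ (ξ : E) (φ : E →L[ℝ] ℝ),
      ∃ F : G →ᵇ ℝ, (∀ g : G, F g = φ (π g ξ)) ∧ IsWAP F := by
  intro ξ φ
  let T := dualCompLeft (𝕜 := ℝ) (orbitBCF π ξ (hcont ξ))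
  refine ⟨T φ, fun g => rfl, isWAP_of_translates_mem_image_closedBall hrefl T ‖φ‖ _ fun g => ?_⟩
  refine ⟨φ.comp (π g : E →L[ℝ] E), by simp, ?_⟩
  exact (dualCompLeft_orbitBCF_compContinuous_mul_left π hmul ξ (hcont ξ) φ g).symm

/-- Matrix coefficients of a strongly continuous representation of a topological group by
bijective linear isometries of a reflexive real Banach space are weakly almost periodic. -/
theorem statement7 {G : Type} [Group G] [TopologicalSpace G] [IsTopologicalGroup G]
    {E : Type} [NormedAddCommGroup E] [NormedSpace ℝ E] [CompleteSpace E]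
    (hrefl : Function.Surjective (NormedSpace.inclusionInDoubleDual ℝ E))
    (π : G → (E ≃ₗᵢ[ℝ] E))
    (hone : π 1 = LinearIsometryEquiv.refl ℝ E)
    (hmul : ∀ g h : G, π (g * h) = (π h).trans (π g))
    (hcont : ∀ ξ : E, Continuous fun g : G => π g ξ) :
    ∀ (ξ : E) (φ : E →L[ℝ] ℝ),
      ∃ F : G →ᵇ ℝ, (∀ g : G, F g = φ (π g ξ)) ∧ IsWAP F :=
  statement7_general hrefl π hmul hcont
end

section
/- Let (X, d) be a metric space with a distinguished point ∗ ∈ X. There exist a real normed space L and an isometric map ι : X → L with ι(∗) = 0 whose image linearly spans L, such that for every real normed space F and every 1-Lipschitz map f : X → F with f(∗) = 0 there is a unique linear map T : L → F of operator norm at most 1 with T ∘ ι = f. -/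
/-!
Realise the free space inside `ℓ^∞` over the unit ball `B` of `Lip₀(X)`: send `x` to the
evaluation functional `δ x = (f ↦ f x)` and let `L` be the linear span of these functionals.
The test function `z ↦ d(z, y) - d(∗, y)` makes `δ` isometric. For a `1`-Lipschitz `f : X → F`
vanishing at `∗` and a norming functional `g` of `∑ aᵢ f xᵢ`, the map `g ∘ f` lies in `B`, so
`‖∑ aᵢ f xᵢ‖ ≤ ‖∑ aᵢ δ xᵢ‖`. Hence `δ x ↦ f x` extends to a well-defined contraction on `L`,
unique because the `δ x` span `L`.
-/

/-- A bundled real normed space. -/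
structure NormedSpaceStruct : Type 1 where
  carrier : Type
  [nacg : NormedAddCommGroup carrier]
  [nsp : NormedSpace ℝ carrier]

attribute [instance] NormedSpaceStruct.nacg NormedSpaceStruct.nsp

open Set Submodule Finsupp
open scoped lp ENNReal

theorem Submodule.span_range_restrict_span_eq_top {R M ι : Type*} [Semiring R] [AddCommMonoid M]
    [Module R M] (v : ι → M) :
    span R (range fun i => (⟨v i, subset_span (mem_range_self i)⟩ : span R (range v))) = ⊤ := by
  convert span_span_coe_preimage (R := R) (s := range v)
  ext w
  simp [Subtype.ext_iff]

theorem exists_linearMap_span_norm_le_of_norm_linearCombination_le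
    {R ι G F : Type*} [Ring R] [SeminormedAddCommGroup G] [Module R G]
    [NormedAddCommGroup F] [Module R F] (v : ι → G) (g : ι → F)
    (h : ∀ m : ι →₀ R, ‖linearCombination R g m‖ ≤ ‖linearCombination R v m‖) :
    ∃ T : span R (range v) →ₗ[R] F,
      (∀ w, ‖T w‖ ≤ ‖w‖) ∧ ∀ i, T ⟨v i, subset_span (mem_range_self i)⟩ = g i := by
  have hker : LinearMap.ker (linearCombination R v) ≤ LinearMap.ker (linearCombination R g) :=
    fun m hm => by simpa [LinearMap.mem_ker.1 hm] using h m
  let T := (LinearMap.ker _).liftQ _ hker ∘ₗ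
    ((LinearEquiv.ofEq _ _ (range_linearCombination R (v := v)).symm).trans
      (linearCombination R v).quotKerEquivRange.symm).toLinearMap
  have hT : ∀ m, T ⟨linearCombination R v m, by simp [← range_linearCombination]⟩ =
      linearCombination R g m := by
    intro m
    change (LinearMap.ker _).liftQ _ hker
      ((linearCombination R v).quotKerEquivRange.symm ⟨_, LinearMap.mem_range_self _ m⟩) = _
    rw [LinearMap.quotKerEquivRange_symm_apply_image]
    rfl
  refine ⟨T, fun ⟨w, hw⟩ => ?_, fun i => by simpa using hT (single i 1)⟩
  rw [← range_linearCombination] at hw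
  obtain ⟨m, rfl⟩ := hw
  exact (congrArg norm (hT m)).trans_le (h m)

namespace ArensEells

variable {X : Type*} [PseudoMetricSpace X]

def unitBall (star : X) : Set (X → ℝ) := {f | LipschitzWith 1 f ∧ f star = 0}

theorem abs_le_dist_of_mem_unitBall {star : X} {f : X → ℝ} (hf : f ∈ unitBall star) (x : X) :
    |f x| ≤ dist x star := by
  simpa [hf.2, Real.dist_eq] using hf.1.dist_le_mul x star

def dirac (star x : X) : ℓ^∞(unitBall star, ℝ) :=
  ⟨fun f => f.1 x, memℓp_infty ⟨dist x star, by
    rintro _ ⟨f, rfl⟩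
    exact abs_le_dist_of_mem_unitBall f.2 x⟩⟩

@[simp]
theorem dirac_apply (star x : X) (f : unitBall star) : dirac star x f = f.1 x := rfl

theorem dirac_self (star : X) : dirac star star = 0 := by
  ext f
  exact f.2.2

theorem isometry_dirac (star : X) : Isometry (dirac star) := by
  refine Isometry.of_dist_eq fun x y => le_antisymm ?_ ?_
  · rw [dist_eq_norm]
    refine lp.norm_le_of_forall_le dist_nonneg fun f => ?_
    simpa [Real.dist_eq] using f.2.1.dist_le_mul x y
  · let f : unitBall star := ⟨fun z => dist z y - dist star y,
      LipschitzWith.of_dist_le_mul fun a b => by simpa [Real.dist_eq] using abs_dist_sub_le a b y,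
      sub_self _⟩
    rw [dist_eq_norm]
    simpa [f, Real.dist_eq] using
      lp.norm_apply_le_norm ENNReal.top_ne_zero (dirac star x - dirac star y) f

theorem norm_linearCombination_le {F : Type*} [SeminormedAddCommGroup F] [NormedSpace ℝ F]
    {star : X} {f : X → F} (hf : LipschitzWith 1 f) (hf₀ : f star = 0) (m : X →₀ ℝ) :
    ‖linearCombination ℝ f m‖ ≤ ‖linearCombination ℝ (dirac star) m‖ := by
  obtain ⟨g, hg, hgm⟩ := exists_dual_vector'' ℝ (linearCombination ℝ f m)
  have hgf : g ∘ f ∈ unitBall star :=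
    ⟨(g.lipschitz.comp hf).weaken (by simpa [← NNReal.coe_le_coe] using hg), by simp [hf₀]⟩
  calc ‖linearCombination ℝ f m‖ = g (linearCombination ℝ f m) := hgm.symm
    _ = linearCombination ℝ (g ∘ f) m := apply_linearCombination ℝ g.toLinearMap f m
    _ = linearCombination ℝ (dirac star) m ⟨g ∘ f, hgf⟩ :=
      by rw [← lp.evalₗ_apply (𝕜 := ℝ), apply_linearCombination]; rfl
    _ ≤ ‖linearCombination ℝ (dirac star) m‖ :=
      (Real.le_norm_self _).trans (lp.norm_apply_le_norm ENNReal.top_ne_zero _ _)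

end ArensEells

open ArensEells in
/-- Existence of the Lipschitz-free normed space over a pointed metric space `(X, ∗)`:
there is a real normed space `L` and an isometric embedding `ι : X → L` sending `∗` to `0`,
whose image linearly spans `L`, such that every `1`-Lipschitz map `f : X → F` into a real
normed space with `f ∗ = 0` factors uniquely through `ι` via a linear map of norm at most
`1`. -/
theorem statement8 {X : Type} [MetricSpace X] (star : X) :
    ∃ (L : NormedSpaceStruct) (ι : X → L.carrier),
      Isometry ι ∧ ι star = 0 ∧ Submodule.span ℝ (Set.range ι) = ⊤ ∧
      ∀ (F : Type) [NormedAddCommGroup F] [NormedSpace ℝ F],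
        ∀ f : X → F, LipschitzWith 1 f → f star = 0 →
          ∃! T : L.carrier →ₗ[ℝ] F,
            (∀ v : L.carrier, ‖T v‖ ≤ ‖v‖) ∧ ∀ x : X, T (ι x) = f x := by
  let ι : X → span ℝ (range (dirac star)) :=
    fun x => ⟨dirac star x, subset_span (mem_range_self x)⟩
  have hspan : span ℝ (range ι) = ⊤ := span_range_restrict_span_eq_top (dirac star)
  refine ⟨⟨span ℝ (range (dirac star))⟩, ι,
    Isometry.of_dist_eq (isometry_dirac star).dist_eq, Subtype.ext (dirac_self star), hspan, ?_⟩
  intro F _ _ f hf hf₀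
  obtain ⟨T, hT, hTι⟩ := exists_linearMap_span_norm_le_of_norm_linearCombination_le
    (dirac star) f (norm_linearCombination_le hf hf₀)
  refine ⟨T, ⟨hT, hTι⟩, fun T' hT' => LinearMap.ext_on hspan ?_⟩
  rintro _ ⟨x, rfl⟩
  exact (hT'.2 x).trans (hTι x).symm
end

section
/- Let (X, d, ∗) be a pointed metric space, B a real Banach space, and ι : X → B an isometric map with ι(∗) = 0 whose image spans a dense linear subspace of B and which has the universal property: for every real Banach space F and every 1-Lipschitz map f : X → F with f(∗) = 0 there is a unique continuous linear map T : B → F of operator norm at most 1 with T ∘ ι = f. Then every bijective self-isometry g of X extends in a unique way to a bijective affine self-isometry g̃ of B, i.e., there is a unique affine bijective isometry g̃ : B → B with g̃ ∘ ι = ι ∘ g; moreover, the assignment g ↦ g̃ is a group homomorphism from the group of bijective self-isometries of X into the group of bijective affine self-isometries of B. -/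
/-!
The universal property lifts `x ↦ ι (g x) - ι (g ∗)` to a contraction `T_g` of `B`. By the
uniqueness half of the universal property a contraction of `B` is determined by its values on
`ι X`, so the lifts of `g` and `g⁻¹` are mutually inverse; hence `T_g` is a linear isometric
automorphism and `b ↦ T_g b + ι (g ∗)` extends `g`. The linear part of an affine isometry is a
contraction, so the same uniqueness gives uniqueness of the extension, and with it the
homomorphism property.
-/

section

variable {X B : Type} [MetricSpace X] [NormedAddCommGroup B] [NormedSpace ℝ B]

def IsLipschitzFree (star : X) (ι : X → B) : Prop :=
  ∀ (F : Type) [NormedAddCommGroup F] [NormedSpace ℝ F] [CompleteSpace F],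
    ∀ f : X → F, LipschitzWith 1 f → f star = 0 →
      ∃! T : B →L[ℝ] F, ‖T‖ ≤ 1 ∧ ∀ x : X, T (ι x) = f x

end

theorem AffineMap.norm_linear_apply_of_isometry {𝕜 E F : Type*} [NormedField 𝕜]
    [SeminormedAddCommGroup E] [NormedSpace 𝕜 E] [SeminormedAddCommGroup F] [NormedSpace 𝕜 F]
    {A : E →ᵃ[𝕜] F} (hA : Isometry A) (v : E) : ‖A.linear v‖ = ‖v‖ := by
  have hv : A.linear v = A v - A 0 := by simpa using A.linearMap_vsub v 0
  rw [hv, ← dist_eq_norm, hA.dist_eq, dist_zero_right]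

namespace IsLipschitzFree

variable {X B F : Type} [MetricSpace X] [NormedAddCommGroup B] [NormedSpace ℝ B]
  [NormedAddCommGroup F] [NormedSpace ℝ F] [CompleteSpace F] {star : X} {ι : X → B}

theorem continuousLinearMap_ext (hU : IsLipschitzFree star ι) (hι : LipschitzWith 1 ι)
    (hstar : ι star = 0) {T T' : B →L[ℝ] F} (hT : ‖T‖ ≤ 1) (hT' : ‖T'‖ ≤ 1)
    (h : ∀ x, T (ι x) = T' (ι x)) : T = T' := by
  have hf : LipschitzWith 1 (T ∘ ι) := by
    simpa using (T.lipschitzWith_of_opNorm_le (K := 1) (by simpa using hT)).comp hι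
  exact (hU F _ hf (by simp [hstar])).unique ⟨hT, fun _ => rfl⟩ ⟨hT', fun x => (h x).symm⟩

theorem affineMap_ext (hU : IsLipschitzFree star ι) (hι : LipschitzWith 1 ι)
    (hstar : ι star = 0) {A A' : B →ᵃ[ℝ] F} (hA : Isometry A) (hA' : Isometry A')
    (h : ∀ x, A (ι x) = A' (ι x)) : A = A' := by
  let L : B →ₗᵢ[ℝ] F := ⟨A.linear, A.norm_linear_apply_of_isometry hA⟩
  let L' : B →ₗᵢ[ℝ] F := ⟨A'.linear, A'.norm_linear_apply_of_isometry hA'⟩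
  have hAι : ∀ (f : B →ᵃ[ℝ] F) x, f.linear (ι x) = f (ι x) - f (ι star) := fun f x => by
    simpa [hstar] using f.linearMap_vsub (ι x) (ι star)
  have hLL' : L.toContinuousLinearMap = L'.toContinuousLinearMap :=
    hU.continuousLinearMap_ext hι hstar L.norm_toContinuousLinearMap_le
      L'.norm_toContinuousLinearMap_le fun x => by simp [L, L', hAι, h]
  exact AffineMap.ext_linear (LinearMap.ext fun v => congrArg (· v) hLL') (h star)

section

variable [CompleteSpace B]

theorem exists_contraction_lift (hU : IsLipschitzFree star ι) (hι : LipschitzWith 1 ι)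
    {φ : X → X} (hφ : LipschitzWith 1 φ) :
    ∃ T : B →L[ℝ] B, ‖T‖ ≤ 1 ∧ ∀ x, T (ι x) = ι (φ x) - ι (φ star) := by
  have hf : LipschitzWith 1 fun x => ι (φ x) - ι (φ star) :=
    LipschitzWith.of_dist_le_mul fun x y => by
      simpa [dist_sub_right] using (hι.comp hφ).dist_le_mul x y
  exact (hU B _ hf (sub_self _)).exists

theorem comp_eq_id_of_leftInverse (hU : IsLipschitzFree star ι) (hι : LipschitzWith 1 ι)
    (hstar : ι star = 0) {φ ψ : X → X} (hψφ : Function.LeftInverse ψ φ) {T S : B →L[ℝ] B}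
    (hT : ‖T‖ ≤ 1) (hS : ‖S‖ ≤ 1) (hTι : ∀ x, T (ι x) = ι (φ x) - ι (φ star))
    (hSι : ∀ x, S (ι x) = ι (ψ x) - ι (ψ star)) : S ∘L T = .id ℝ B := by
  refine hU.continuousLinearMap_ext hι hstar ?_ ContinuousLinearMap.norm_id_le fun x => ?_
  · simpa using (S.opNorm_comp_le T).trans (mul_le_one₀ hS (norm_nonneg T) hT)
  · simp [hTι, hSι, hψφ x, hψφ star, hstar]

theorem exists_affineIsometryEquiv (hU : IsLipschitzFree star ι) (hι : LipschitzWith 1 ι)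
    (hstar : ι star = 0) (g : X ≃ᵢ X) : ∃ A : B ≃ᵃⁱ[ℝ] B, ∀ x, A (ι x) = ι (g x) := by
  obtain ⟨T, hT, hTι⟩ := hU.exists_contraction_lift hι g.isometry.lipschitz
  obtain ⟨S, hS, hSι⟩ := hU.exists_contraction_lift hι g.symm.isometry.lipschitz
  have hST := hU.comp_eq_id_of_leftInverse hι hstar g.symm_apply_apply hT hS hTι hSι
  have hTS := hU.comp_eq_id_of_leftInverse hι hstar g.apply_symm_apply hS hT hSι hTι
  let e : B ≃ₗᵢ[ℝ] B := .ofBounds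
    (ContinuousLinearEquiv.equivOfInverse' T S hTS hST).toLinearEquiv
    (fun b => (T.le_of_opNorm_le hT b).trans_eq (one_mul _))
    (fun b => (S.le_of_opNorm_le hS b).trans_eq (one_mul _))
  refine ⟨e.toAffineIsometryEquiv.trans (.constVAdd ℝ B (ι (g star))), fun x => ?_⟩
  change ι (g star) + T (ι x) = ι (g x)
  rw [hTι, add_sub_cancel]

end

end IsLipschitzFree

theorem statement10_general {X B : Type} [MetricSpace X] (star : X)
    [NormedAddCommGroup B] [NormedSpace ℝ B] [CompleteSpace B]
    (ι : X → B) (hiso : Isometry ι) (hstar : ι star = 0)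
    (huniv : ∀ (F : Type) [NormedAddCommGroup F] [NormedSpace ℝ F] [CompleteSpace F],
      ∀ f : X → F, LipschitzWith 1 f → f star = 0 →
        ∃! T : B →L[ℝ] F, ‖T‖ ≤ 1 ∧ ∀ x : X, T (ι x) = f x) :
    ∃ ext : (X ≃ᵢ X) → (B →ᵃ[ℝ] B),
      (∀ g : X ≃ᵢ X,
        (Isometry ⇑(ext g) ∧ Function.Bijective ⇑(ext g) ∧
          ∀ x : X, ext g (ι x) = ι (g x)) ∧
        (∀ A : B →ᵃ[ℝ] B, Isometry ⇑A → Function.Bijective ⇑A →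
          (∀ x : X, A (ι x) = ι (g x)) → A = ext g)) ∧
      (∀ g h : X ≃ᵢ X, ext (h.trans g) = (ext g).comp (ext h)) := by
  have hU : IsLipschitzFree star ι := huniv
  have hι := hiso.lipschitz
  choose A hA using hU.exists_affineIsometryEquiv hι hstar
  refine ⟨fun g => (A g).toAffineEquiv, fun g => ⟨⟨(A g).isometry, (A g).bijective, hA g⟩, ?_⟩, ?_⟩
  · intro A' hA' _ hA'ι
    exact hU.affineMap_ext hι hstar hA' (A g).isometry fun x => by simp [hA'ι, hA]
  · intro g h
    exact hU.affineMap_ext hι hstar (A _).isometry ((A g).isometry.comp (A h).isometry)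
      fun x => by simp [hA]

/-- If `ι : X → B` is an isometric embedding of a pointed metric space into a real Banach
space with `ι ∗ = 0`, dense linear span, and the universal property of the Lipschitz-free
Banach space, then every bijective self-isometry `g` of `X` extends uniquely to a bijective
affine self-isometry of `B`, and the resulting assignment is a group homomorphism. -/
theorem statement10 {X B : Type} [MetricSpace X] (star : X)
    [NormedAddCommGroup B] [NormedSpace ℝ B] [CompleteSpace B]
    (ι : X → B) (hiso : Isometry ι) (hstar : ι star = 0)
    (hdense : Dense (↑(Submodule.span ℝ (Set.range ι)) : Set B))
    (huniv : ∀ (F : Type) [NormedAddCommGroup F] [NormedSpace ℝ F] [CompleteSpace F],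
      ∀ f : X → F, LipschitzWith 1 f → f star = 0 →
        ∃! T : B →L[ℝ] F, ‖T‖ ≤ 1 ∧ ∀ x : X, T (ι x) = f x) :
    ∃ ext : (X ≃ᵢ X) → (B →ᵃ[ℝ] B),
      (∀ g : X ≃ᵢ X,
        (Isometry ⇑(ext g) ∧ Function.Bijective ⇑(ext g) ∧
          ∀ x : X, ext g (ι x) = ι (g x)) ∧
        (∀ A : B →ᵃ[ℝ] B, Isometry ⇑A → Function.Bijective ⇑A →
          (∀ x : X, A (ι x) = ι (g x)) → A = ext g)) ∧
      (∀ g h : X ≃ᵢ X, ext (h.trans g) = (ext g).comp (ext h)) :=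
  statement10_general star ι hiso hstar huniv
end

section
/- Let (X, d, ∗) be a pointed metric space, B a real Banach space, and ι : X → B an isometric map with ι(∗) = 0 whose image spans a dense linear subspace of B. Let a topological group G act continuously by isometries on X, and let G act on B by bijective affine isometries so that g·ι(x) = ι(g·x) for all g ∈ G and x ∈ X. Then the action of G on B is jointly continuous. -/
/-!
Orbit maps `g ↦ g • ι x` are continuous because the action on `X` is, and affineness spreads this
to every point of the span of `ι(X)`. Since each `g` acts `1`-Lipschitz, continuity of the orbit
maps on a dense set already gives joint continuity.
-/

open Submodule

section OrbitMaps

variable {α R E F : Type*} [TopologicalSpace α] [Ring R] [AddCommGroup E] [Module R E]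
  [AddCommGroup F] [Module R F] [TopologicalSpace F] [IsTopologicalAddGroup F]
  [ContinuousConstSMul R F]

theorem continuous_linearMap_apply_of_mem_span {L : α → E →ₗ[R] F} {s : Set E}
    (hs : ∀ v ∈ s, Continuous fun a => L a v) {v : E} (hv : v ∈ span R s) :
    Continuous fun a => L a v := by
  induction hv using span_induction with
  | mem v hv => exact hs v hv
  | zero => simp only [map_zero]; exact continuous_const
  | add v w _ _ hv hw => simp only [map_add]; exact hv.add hw
  | smul c v _ hv => simp only [map_smul]; exact hv.const_smul c

theorem continuous_affineMap_apply_of_mem_span {f : α → E →ᵃ[R] F} {s : Set E}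
    (h0 : Continuous fun a => f a 0) (hs : ∀ v ∈ s, Continuous fun a => f a v) {v : E}
    (hv : v ∈ span R s) : Continuous fun a => f a v := by
  have decomp : ∀ a w, f a w = (f a).linear w + f a 0 := fun a w => congrFun (f a).decomp w
  have hlinear : ∀ w ∈ s, Continuous fun a => (f a).linear w := fun w hw => by
    simp_rw [eq_sub_of_add_eq (decomp _ w).symm]
    exact (hs w hw).sub h0
  simp_rw [decomp _ v]
  exact (continuous_linearMap_apply_of_mem_span hlinear hv).add h0

end OrbitMaps

theorem statement11_general {G X B : Type} [TopologicalSpace G]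
    [MetricSpace X] [NormedAddCommGroup B] [NormedSpace ℝ B]
    (star : X) (ι : X → B) (hiso : Isometry ι) (hstar : ι star = 0)
    (hdense : Dense (↑(Submodule.span ℝ (Set.range ι)) : Set B))
    (actX : G → X → X)
    (hXcont : Continuous fun p : G × X => actX p.1 p.2)
    (actB : G → (B →ᵃ[ℝ] B))
    (hBiso : ∀ g, Isometry ⇑(actB g))
    (hcompat : ∀ (g : G) (x : X), actB g (ι x) = ι (actX g x)) :
    Continuous fun p : G × B => actB p.1 p.2 := by
  have horbit : ∀ x, Continuous fun g => actB g (ι x) := fun x => by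
    simp_rw [hcompat]
    exact hiso.continuous.comp (hXcont.comp (continuous_id.prodMk continuous_const))
  have horbit_zero : Continuous fun g => actB g 0 := by
    simpa only [hstar] using horbit star
  exact continuous_prod_of_dense_continuous_lipschitzWith' _ 1 hdense
    (fun g => (hBiso g).lipschitz) fun v hv =>
      continuous_affineMap_apply_of_mem_span horbit_zero (Set.forall_mem_range.2 horbit) hv

/-- If a topological group `G` acts continuously by isometries on a metric space `X`,
isometrically embedded via `ι` (with `ι ∗ = 0` and dense linear span) into a real Banach
space `B`, and `G` acts on `B` by bijective affine isometries compatibly with `ι`, then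
the action of `G` on `B` is jointly continuous. -/
theorem statement11 {G X B : Type} [Group G] [TopologicalSpace G] [IsTopologicalGroup G]
    [MetricSpace X] [NormedAddCommGroup B] [NormedSpace ℝ B] [CompleteSpace B]
    (star : X) (ι : X → B) (hiso : Isometry ι) (hstar : ι star = 0)
    (hdense : Dense (↑(Submodule.span ℝ (Set.range ι)) : Set B))
    (actX : G → X → X)
    (hXiso : ∀ g, Isometry (actX g)) (hXbij : ∀ g, Function.Bijective (actX g))
    (hXone : ∀ x, actX 1 x = x) (hXmul : ∀ g h x, actX (g * h) x = actX g (actX h x))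
    (hXcont : Continuous fun p : G × X => actX p.1 p.2)
    (actB : G → (B →ᵃ[ℝ] B))
    (hBiso : ∀ g, Isometry ⇑(actB g)) (hBbij : ∀ g, Function.Bijective ⇑(actB g))
    (hBone : ∀ v : B, actB 1 v = v)
    (hBmul : ∀ (g h : G) (v : B), actB (g * h) v = actB g (actB h v))
    (hcompat : ∀ (g : G) (x : X), actB g (ι x) = ι (actX g x)) :
    Continuous fun p : G × B => actB p.1 p.2 :=
  statement11_general star ι hiso hstar hdense actX hXcont actB hBiso hcompat
end

section
/- Let Y be a metric space, let A, B ⊆ Y be nonempty finite subsets with d(a, b) ≥ ε for all a ∈ A and b ∈ B, let φ be a Katetov function on A and ψ a Katetov function on B. Then the Katetov extensions φ̂ and ψ̂ to Y satisfy sup_{x ∈ Y} |φ̂(x) − ψ̂(x)| ≥ ε. -/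
/-!
Let `a₀` minimise `φ` on `A`, let `b₁ ∈ B` realise `ψ̂ a₀` and `a₁ ∈ A` realise `φ̂ b₁`. A Katetov
extension agrees with the function on its finite set, so
`|φ̂ a₀ - ψ̂ a₀| + |φ̂ b₁ - ψ̂ b₁| ≥ (ψ b₁ + d(b₁, a₀) - φ a₀) + (φ a₁ + d(a₁, b₁) - ψ b₁) ≥ 2ε`,
using `φ a₁ ≥ φ a₀`. One of the two terms is therefore at least `ε`.
-/

/-- `f` is a Katetov function on the finite set `S`: for all `x, y ∈ S`,
`|f x - f y| ≤ dist x y ≤ f x + f y`. -/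
def KatetovOn {Z : Type*} [MetricSpace Z] (S : Finset Z) (f : Z → ℝ) : Prop :=
  ∀ x ∈ S, ∀ y ∈ S, |f x - f y| ≤ dist x y ∧ dist x y ≤ f x + f y

/-- The Katetov extension of a function `f` defined on a nonempty finite set `S`:
`f̂ x = min_{s ∈ S} (f s + dist s x)`. -/
noncomputable def katExt {Z : Type*} [MetricSpace Z] (S : Finset Z) (hS : S.Nonempty)
    (f : Z → ℝ) (x : Z) : ℝ :=
  S.inf' hS fun s => f s + dist s x

section katExt

variable {Z : Type*} [MetricSpace Z] {S : Finset Z} (hS : S.Nonempty) (f : Z → ℝ)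

lemma katExt_le {s : Z} (hs : s ∈ S) (x : Z) : katExt S hS f x ≤ f s + dist s x :=
  Finset.inf'_le _ hs

lemma katExt_le_iff {y : ℝ} (x : Z) : y ≤ katExt S hS f x ↔ ∀ s ∈ S, y ≤ f s + dist s x :=
  Finset.le_inf'_iff hS _

lemma exists_mem_katExt_eq (x : Z) : ∃ s ∈ S, katExt S hS f x = f s + dist s x :=
  S.exists_mem_eq_inf' hS _

variable {f}

lemma abs_katExt_sub_dist_le (hf : ∀ s ∈ S, 0 ≤ f s) (p x : Z) :
    |katExt S hS f x - dist p x| ≤ S.sup' hS fun s => f s + dist s p := by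
  obtain ⟨s, hs, hs_eq⟩ := exists_mem_katExt_eq hS f x
  have hs_le : f s + dist s p ≤ S.sup' hS fun s => f s + dist s p :=
    S.le_sup' (fun s => f s + dist s p) hs
  rw [abs_le]
  constructor
  · have := dist_triangle p s x
    rw [dist_comm p s] at this
    linarith [hf s hs]
  · have := dist_triangle s p x
    linarith [katExt_le hS f hs x]

end katExt

namespace KatetovOn

variable {Z : Type*} [MetricSpace Z] {S : Finset Z} {f : Z → ℝ}

lemma nonneg (hf : KatetovOn S f) {s : Z} (hs : s ∈ S) : 0 ≤ f s := by
  have := (hf s hs s hs).2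
  rw [dist_self] at this
  linarith

lemma katExt_eq (hf : KatetovOn S f) (hS : S.Nonempty) {s : Z} (hs : s ∈ S) :
    katExt S hS f s = f s := by
  refine le_antisymm (by simpa using katExt_le hS f hs s) <|
    (katExt_le_iff hS f s).2 fun t ht => ?_
  have := (abs_le.mp (hf s hs t ht).1).2
  rw [dist_comm] at this
  linarith

end KatetovOn

lemma bddAbove_range_abs_katExt_sub {Y : Type*} [MetricSpace Y] {A B : Finset Y}
    (hA : A.Nonempty) (hB : B.Nonempty) {φ ψ : Y → ℝ}
    (hφ : ∀ a ∈ A, 0 ≤ φ a) (hψ : ∀ b ∈ B, 0 ≤ ψ b) :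
    BddAbove (Set.range fun x => |katExt A hA φ x - katExt B hB ψ x|) := by
  obtain ⟨p, -⟩ := id hA
  refine ⟨(A.sup' hA fun a => φ a + dist a p) + B.sup' hB fun b => ψ b + dist b p, ?_⟩
  rintro _ ⟨x, rfl⟩
  calc |katExt A hA φ x - katExt B hB ψ x|
      ≤ |katExt A hA φ x - dist p x| + |katExt B hB ψ x - dist p x| :=
        (abs_sub_le _ _ _).trans_eq (by rw [abs_sub_comm (dist p x)])
    _ ≤ _ := add_le_add (abs_katExt_sub_dist_le hA hφ p x) (abs_katExt_sub_dist_le hB hψ p x)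

lemma exists_le_abs_katExt_sub {Y : Type*} [MetricSpace Y] {A B : Finset Y}
    (hA : A.Nonempty) (hB : B.Nonempty) {ε : ℝ} (hfar : ∀ a ∈ A, ∀ b ∈ B, ε ≤ dist a b)
    {φ ψ : Y → ℝ} (hφ : KatetovOn A φ) (hψ : KatetovOn B ψ) :
    ∃ x, ε ≤ |katExt A hA φ x - katExt B hB ψ x| := by
  obtain ⟨a₀, ha₀, hmin⟩ := A.exists_min_image φ hA
  obtain ⟨b₁, hb₁, hb₁_eq⟩ := exists_mem_katExt_eq hB ψ a₀
  obtain ⟨a₁, ha₁, ha₁_eq⟩ := exists_mem_katExt_eq hA φ b₁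
  have h₀ : ψ b₁ + dist b₁ a₀ - φ a₀ ≤ |katExt A hA φ a₀ - katExt B hB ψ a₀| := by
    rw [abs_sub_comm, hφ.katExt_eq hA ha₀, hb₁_eq]
    exact le_abs_self _
  have h₁ : φ a₁ + dist a₁ b₁ - ψ b₁ ≤ |katExt A hA φ b₁ - katExt B hB ψ b₁| := by
    rw [hψ.katExt_eq hB hb₁, ha₁_eq]
    exact le_abs_self _
  by_contra! h
  linarith [h a₀, h b₁, hfar a₀ ha₀ b₁ hb₁, hfar a₁ ha₁ b₁ hb₁, hmin a₁ ha₁, dist_comm a₀ b₁]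

/-- If `A` and `B` are nonempty finite subsets of a metric space `Y` at mutual distance at
least `ε`, `φ` is Katetov on `A` and `ψ` is Katetov on `B`, then the Katetov extensions
satisfy `sup_{x ∈ Y} |φ̂ x - ψ̂ x| ≥ ε`. -/
theorem statement13 {Y : Type} [MetricSpace Y] (A B : Finset Y)
    (hA : A.Nonempty) (hB : B.Nonempty) (ε : ℝ)
    (hfar : ∀ a ∈ A, ∀ b ∈ B, ε ≤ dist a b)
    (φ ψ : Y → ℝ) (hφ : KatetovOn A φ) (hψ : KatetovOn B ψ) :
    ε ≤ ⨆ x : Y, |katExt A hA φ x - katExt B hB ψ x| := by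
  obtain ⟨x, hx⟩ := exists_le_abs_katExt_sub hA hB hfar hφ hψ
  exact hx.trans <| le_ciSup
    (bddAbove_range_abs_katExt_sub hA hB (fun _ => hφ.nonneg) (fun _ => hψ.nonneg)) x
end

section
/- Let a group G act by isometries on a metric space X, strongly moving with constant ε > 0. Let X* be the set of all functions X → ℝ of the form f̂ for some nonempty finite S ⊆ X and some Katetov function f on S, equipped with the supremum metric d(φ, ψ) = sup_{x ∈ X} |φ(x) − ψ(x)| (which is finite on X*). Then G acts on X* by isometries via g·φ = φ ∘ g⁻¹, this action extends the action on X (identifying x ∈ X with the Katetov extension of the zero function on {x}), and it is strongly moving with the same constant ε. -/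
/-- The space `X*` of all Katetov extensions of Katetov functions on nonempty finite
subsets of `X`. -/
def KatStar (X : Type*) [MetricSpace X] : Set (X → ℝ) :=
  {φ | ∃ (S : Finset X) (hS : S.Nonempty) (f : X → ℝ), KatetovOn S f ∧ φ = katExt S hS f}

/-- The supremum distance between two functions `X → ℝ`. -/
noncomputable def supD {X : Type*} (φ ψ : X → ℝ) : ℝ :=
  ⨆ x : X, |φ x - ψ x|

/-!
The Katetov extension `f̂` of a Katetov function `f` on a finite set `S` is `1`-Lipschitz and
agrees with `f` on `S`. Hence the difference of two such extensions is bounded by its values on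
the two (finite) supports, so the sup metric is finite on `X*`, and `g` transports `f̂` to the
extension of `f ∘ g⁻¹` on `g S`. For strong moving, choose `g` moving the union `U` of all
supports of a finite `F ⊆ X*` off itself by `ε`; given `φ = f̂` and `ψ = ĥ` in `F`, evaluate at a
point of `S ∪ g T` where the smaller of `min f` and `min h` is attained: there one extension
equals that minimum while the other exceeds it by at least `ε`.
-/

lemma le_supD {Z : Type*} {φ ψ : Z → ℝ} (hbdd : BddAbove (Set.range fun x => |φ x - ψ x|))
    (x : Z) : |φ x - ψ x| ≤ supD φ ψ :=
  le_ciSup hbdd x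

lemma supD_comp_of_surjective {Z W : Type*} {e : W → Z} (he : Function.Surjective e)
    (φ ψ : Z → ℝ) : supD (φ ∘ e) (ψ ∘ e) = supD φ ψ :=
  congrArg sSup (he.range_comp fun x => |φ x - ψ x|)

section Katetov

variable {Z W : Type*} [MetricSpace Z] [MetricSpace W]

lemma katExt_eq_of_mem {S : Finset Z} (hS : S.Nonempty) {f : Z → ℝ} (hf : KatetovOn S f)
    {t : Z} (ht : t ∈ S) : katExt S hS f t = f t := by
  refine le_antisymm ?_ (Finset.le_inf' _ _ fun s hs => ?_)
  · exact (Finset.inf'_le (fun s => f s + dist s t) ht).trans_eq (by simp)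
  · have := (abs_le.mp (hf t ht s hs).1).2
    rw [dist_comm] at this
    linarith

lemma katExt_le_katExt_add_dist {S : Finset Z} (hS : S.Nonempty) (f : Z → ℝ) (x y : Z) :
    katExt S hS f x ≤ katExt S hS f y + dist y x := by
  obtain ⟨s, hs, hsy⟩ := Finset.exists_mem_eq_inf' hS fun s => f s + dist s y
  calc katExt S hS f x ≤ f s + dist s x := Finset.inf'_le _ hs
    _ ≤ f s + dist s y + dist y x := by linarith [dist_triangle s y x]
    _ = katExt S hS f y + dist y x := by rw [katExt, hsy]

lemma katExt_sub_katExt_le_sup' {S T : Finset Z} (hS : S.Nonempty) (hT : T.Nonempty)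
    (f : Z → ℝ) {h : Z → ℝ} (hh : KatetovOn T h) (x : Z) :
    katExt S hS f x - katExt T hT h x ≤
      T.sup' hT fun t => katExt S hS f t - katExt T hT h t := by
  obtain ⟨t, ht, htx⟩ := Finset.exists_mem_eq_inf' hT fun t => h t + dist t x
  have hlip := katExt_le_katExt_add_dist hS f x t
  have hsup := Finset.le_sup' (fun t => katExt S hS f t - katExt T hT h t) ht
  rw [katExt_eq_of_mem hT hh ht] at hsup
  have hx : katExt T hT h x = h t + dist t x := htx
  linarith

lemma abs_katExt_sub_katExt_le {S T : Finset Z} (hS : S.Nonempty) (hT : T.Nonempty)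
    {f h : Z → ℝ} (hf : KatetovOn S f) (hh : KatetovOn T h) (x : Z) :
    |katExt S hS f x - katExt T hT h x| ≤
      max (S.sup' hS fun u => |katExt S hS f u - katExt T hT h u|)
        (T.sup' hT fun u => |katExt S hS f u - katExt T hT h u|) := by
  rw [abs_sub_le_iff]
  constructor
  · calc katExt S hS f x - katExt T hT h x
        ≤ T.sup' hT fun t => katExt S hS f t - katExt T hT h t :=
          katExt_sub_katExt_le_sup' hS hT f hh x
      _ ≤ T.sup' hT fun u => |katExt S hS f u - katExt T hT h u| :=
          Finset.sup'_mono_fun fun _ _ => le_abs_self _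
      _ ≤ _ := le_max_right _ _
  · calc katExt T hT h x - katExt S hS f x
        ≤ S.sup' hS fun s => katExt T hT h s - katExt S hS f s :=
          katExt_sub_katExt_le_sup' hT hS h hf x
      _ ≤ S.sup' hS fun u => |katExt S hS f u - katExt T hT h u| :=
          Finset.sup'_mono_fun fun _ _ => abs_sub_comm (katExt S hS f _) _ ▸ le_abs_self _
      _ ≤ _ := le_max_left _ _

lemma bddAbove_range_abs_sub_of_mem_katStar {φ ψ : Z → ℝ} (hφ : φ ∈ KatStar Z)
    (hψ : ψ ∈ KatStar Z) : BddAbove (Set.range fun x => |φ x - ψ x|) := by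
  obtain ⟨S, hS, f, hf, rfl⟩ := hφ
  obtain ⟨T, hT, h, hh, rfl⟩ := hψ
  exact ⟨_, Set.forall_mem_range.mpr (abs_katExt_sub_katExt_le hS hT hf hh)⟩

lemma dist_mem_katStar (x : Z) : (fun y => dist x y) ∈ KatStar Z := by
  refine ⟨{x}, Finset.singleton_nonempty x, fun _ => 0, ?_, ?_⟩
  · simp [KatetovOn]
  · funext y
    simp [katExt]

lemma supD_dist_dist (x y : Z) : supD (fun z => dist x z) (fun z => dist y z) = dist x y := by
  have : Nonempty Z := ⟨x⟩
  refine le_antisymm (ciSup_le fun z => abs_dist_sub_le x y z) ?_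
  simpa using le_supD (bddAbove_range_abs_sub_of_mem_katStar (dist_mem_katStar x)
    (dist_mem_katStar y)) y

lemma dist_comp_isometryEquiv (e : W ≃ᵢ Z) (x : Z) :
    (fun y => dist x y) ∘ e = fun y => dist (e.symm x) y := by
  funext y
  rw [Function.comp_apply, ← e.dist_eq, e.apply_symm_apply]

lemma KatetovOn.image_symm [DecidableEq W] {S : Finset Z} {f : Z → ℝ} (hf : KatetovOn S f)
    (e : W ≃ᵢ Z) : KatetovOn (S.image e.symm) (f ∘ e) := by
  simp only [KatetovOn, Finset.mem_image]
  rintro _ ⟨s, hs, rfl⟩ _ ⟨t, ht, rfl⟩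
  simpa [e.symm.dist_eq] using hf s hs t ht

lemma katExt_comp_isometryEquiv [DecidableEq W] {S : Finset Z} (hS : S.Nonempty) (f : Z → ℝ)
    (e : W ≃ᵢ Z) :
    katExt S hS f ∘ e = katExt (S.image e.symm) (hS.image _) (f ∘ e) := by
  funext x
  simp only [Function.comp_apply, katExt, Finset.inf'_image]
  refine Finset.inf'_congr _ rfl fun s _ => ?_
  rw [← e.dist_eq, e.apply_symm_apply]

lemma comp_isometryEquiv_mem_katStar {φ : Z → ℝ} (hφ : φ ∈ KatStar Z) (e : W ≃ᵢ Z) :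
    φ ∘ e ∈ KatStar W := by
  classical
  obtain ⟨S, hS, f, hf, rfl⟩ := hφ
  exact ⟨_, _, _, hf.image_symm e, katExt_comp_isometryEquiv hS f e⟩

lemma add_le_katExt {T : Finset Z} (hT : T.Nonempty) {h : Z → ℝ} {c ε : ℝ} {x : Z}
    (hc : ∀ t ∈ T, c ≤ h t) (hε : ∀ t ∈ T, ε ≤ dist t x) : c + ε ≤ katExt T hT h x :=
  Finset.le_inf' _ _ fun t ht => add_le_add (hc t ht) (hε t ht)

lemma exists_le_abs_katExt_sub_katExt {S T : Finset Z} (hS : S.Nonempty) (hT : T.Nonempty)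
    {f h : Z → ℝ} (hf : KatetovOn S f) (hh : KatetovOn T h) {ε : ℝ}
    (hsep : ∀ s ∈ S, ∀ t ∈ T, ε ≤ dist s t) :
    ∃ x, ε ≤ |katExt S hS f x - katExt T hT h x| := by
  obtain ⟨s₀, hs₀, hs₀min⟩ := S.exists_min_image f hS
  obtain ⟨t₀, ht₀, ht₀min⟩ := T.exists_min_image h hT
  rcases le_total (f s₀) (h t₀) with hle | hle
  · have hT_far := add_le_katExt hT (c := f s₀) (x := s₀)
      (fun t ht => hle.trans (ht₀min t ht)) fun t ht => dist_comm s₀ t ▸ hsep s₀ hs₀ t ht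
    refine ⟨s₀, le_abs.mpr (Or.inr ?_)⟩
    rw [katExt_eq_of_mem hS hf hs₀]
    linarith
  · have hS_far := add_le_katExt hS (c := h t₀) (x := t₀)
      (fun s hs => hle.trans (hs₀min s hs)) fun s hs => hsep s hs t₀ ht₀
    refine ⟨t₀, le_abs.mpr (Or.inl ?_)⟩
    rw [katExt_eq_of_mem hT hh ht₀]
    linarith

lemma le_supD_katExt_katExt {S T : Finset Z} (hS : S.Nonempty) (hT : T.Nonempty)
    {f h : Z → ℝ} (hf : KatetovOn S f) (hh : KatetovOn T h) {ε : ℝ}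
    (hsep : ∀ s ∈ S, ∀ t ∈ T, ε ≤ dist s t) :
    ε ≤ supD (katExt S hS f) (katExt T hT h) := by
  obtain ⟨x, hx⟩ := exists_le_abs_katExt_sub_katExt hS hT hf hh hsep
  exact hx.trans <| le_supD (bddAbove_range_abs_sub_of_mem_katStar
    ⟨S, hS, f, hf, rfl⟩ ⟨T, hT, h, hh, rfl⟩) x

lemma exists_finset_supports_of_subset_katStar (F : Finset (Z → ℝ)) (hF : ↑F ⊆ KatStar Z) :
    ∃ U : Finset Z, ∀ φ ∈ F, ∃ S ⊆ U, ∃ (hS : S.Nonempty) (f : Z → ℝ),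
      KatetovOn S f ∧ φ = katExt S hS f := by
  classical
  choose S hS f hf hφ using fun φ (h : φ ∈ F) => hF h
  exact ⟨F.attach.biUnion fun φ => S φ.1 φ.2, fun φ h => ⟨S φ h,
    fun x hx => Finset.mem_biUnion.mpr ⟨⟨φ, h⟩, Finset.mem_attach _ _, hx⟩, hS φ h, f φ h,
    hf φ h, hφ φ h⟩⟩

end Katetov

theorem statement15_general {G X : Type} [Group G] [MetricSpace X]
    (act : G → X → X) (hiso : ∀ g, Isometry (act g))
    (hone : ∀ x, act 1 x = x) (hmul : ∀ g h x, act (g * h) x = act g (act h x))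
    (ε : ℝ)
    (hsm : ∀ F : Finset X, ∃ g : G, ∀ a ∈ F, ∀ b ∈ F, ε ≤ dist a (act g b)) :
    -- the sup metric is finite on `X*`
    (∀ φ ∈ KatStar X, ∀ ψ ∈ KatStar X, BddAbove (Set.range fun x => |φ x - ψ x|)) ∧
    -- `g · φ = φ ∘ g⁻¹` maps `X*` to itself
    (∀ (g : G), ∀ φ ∈ KatStar X, (φ ∘ act g⁻¹) ∈ KatStar X) ∧
    -- it is an action
    (∀ φ : X → ℝ, φ ∘ act (1 : G)⁻¹ = φ) ∧
    (∀ (g h : G) (φ : X → ℝ), φ ∘ act (g * h)⁻¹ = (φ ∘ act h⁻¹) ∘ act g⁻¹) ∧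
    -- the action is by isometries of the sup metric
    (∀ (g : G), ∀ φ ∈ KatStar X, ∀ ψ ∈ KatStar X,
      supD (φ ∘ act g⁻¹) (ψ ∘ act g⁻¹) = supD φ ψ) ∧
    -- `X` embeds isometrically and equivariantly into `X*`
    (∀ x : X, (fun y => dist x y) ∈ KatStar X) ∧
    (∀ x y : X, supD (fun z => dist x z) (fun z => dist y z) = dist x y) ∧
    (∀ (g : G) (x : X), (fun y => dist x y) ∘ act g⁻¹ = fun y => dist (act g x) y) ∧
    -- the action on `X*` is strongly moving with the same constant
    (∀ F : Finset (X → ℝ), ↑F ⊆ KatStar X →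
      ∃ g : G, ∀ φ ∈ F, ∀ ψ ∈ F, ε ≤ supD φ (ψ ∘ act g⁻¹)) := by
  classical
  let e (g : G) : X ≃ᵢ X :=
    IsometryEquiv.mk' (act g⁻¹) (act g) (fun x => by rw [← hmul, inv_mul_cancel, hone])
      (hiso g⁻¹)
  refine ⟨fun _ hφ _ hψ => bddAbove_range_abs_sub_of_mem_katStar hφ hψ,
    fun g _ hφ => comp_isometryEquiv_mem_katStar hφ (e g),
    fun φ => by simp [Function.comp_def, hone], fun g h φ => by simp [Function.comp_def, hmul],
    fun g φ _ ψ _ => supD_comp_of_surjective (e g).surjective φ ψ, dist_mem_katStar,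
    supD_dist_dist, fun g => dist_comp_isometryEquiv (e g), fun F hF => ?_⟩
  obtain ⟨U, hU⟩ := exists_finset_supports_of_subset_katStar F hF
  obtain ⟨g, hg⟩ := hsm U
  refine ⟨g, fun φ hφ ψ hψ => ?_⟩
  obtain ⟨S, hSU, hS, f, hf, rfl⟩ := hU φ hφ
  obtain ⟨T, hTU, hT, h, hh, rfl⟩ := hU ψ hψ
  rw [show act g⁻¹ = e g from rfl, katExt_comp_isometryEquiv]
  refine le_supD_katExt_katExt hS _ hf (hh.image_symm (e g)) fun s hs _ ht => ?_
  obtain ⟨t, htT, rfl⟩ := Finset.mem_image.mp ht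
  exact hg s (hSU hs) t (hTU htT)

/-- A strongly moving isometric action of `G` on `X` induces, via `g · φ = φ ∘ g⁻¹`, an
isometric action of `G` on the space `X*` of Katetov extensions with the sup metric (which
is finite on `X*`); this action extends the action on `X` (identifying `x ∈ X` with the
function `y ↦ dist x y`, i.e. the Katetov extension of the zero function on `{x}`) and is
strongly moving with the same constant `ε`. -/
theorem statement15 {G X : Type} [Group G] [MetricSpace X]
    (act : G → X → X) (hiso : ∀ g, Isometry (act g))
    (hone : ∀ x, act 1 x = x) (hmul : ∀ g h x, act (g * h) x = act g (act h x))
    (ε : ℝ) (hε : 0 < ε)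
    (hsm : ∀ F : Finset X, ∃ g : G, ∀ a ∈ F, ∀ b ∈ F, ε ≤ dist a (act g b)) :
    -- the sup metric is finite on `X*`
    (∀ φ ∈ KatStar X, ∀ ψ ∈ KatStar X, BddAbove (Set.range fun x => |φ x - ψ x|)) ∧
    -- `g · φ = φ ∘ g⁻¹` maps `X*` to itself
    (∀ (g : G), ∀ φ ∈ KatStar X, (φ ∘ act g⁻¹) ∈ KatStar X) ∧
    -- it is an action
    (∀ φ : X → ℝ, φ ∘ act (1 : G)⁻¹ = φ) ∧
    (∀ (g h : G) (φ : X → ℝ), φ ∘ act (g * h)⁻¹ = (φ ∘ act h⁻¹) ∘ act g⁻¹) ∧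
    -- the action is by isometries of the sup metric
    (∀ (g : G), ∀ φ ∈ KatStar X, ∀ ψ ∈ KatStar X,
      supD (φ ∘ act g⁻¹) (ψ ∘ act g⁻¹) = supD φ ψ) ∧
    -- `X` embeds isometrically and equivariantly into `X*`
    (∀ x : X, (fun y => dist x y) ∈ KatStar X) ∧
    (∀ x y : X, supD (fun z => dist x z) (fun z => dist y z) = dist x y) ∧
    (∀ (g : G) (x : X), (fun y => dist x y) ∘ act g⁻¹ = fun y => dist (act g x) y) ∧
    -- the action on `X*` is strongly moving with the same constant
    (∀ F : Finset (X → ℝ), ↑F ⊆ KatStar X →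
      ∃ g : G, ∀ φ ∈ F, ∀ ψ ∈ F, ε ≤ supD φ (ψ ∘ act g⁻¹)) :=
  statement15_general act hiso hone hmul ε hsm
end
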